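/- arXiv:1010.1455 — 5 statements merged into one kernel-verified Lean document; each statement's English description precedes it below -/
import Mathlib

section
/- In the game of Nim on graphs played on a path with an odd number of edges, all of whose edges have positive integer weight, with the indicator piece starting at an endpoint (a vertex of degree one), the first player has a winning strategy. -/
/-!
The first player empties the edge `0 — 1` and moves to `1`. From then on the first player keeps
the invariant: the piece is at a vertex `s` with `n - s` even, every edge left of `s` is empty and
every edge right of `s` is positive. The opponent can only move to `s + 1`. If the edge
`s — s + 1` is still positive, the first player empties it moving back to `s`, where the
opponent is stuck; otherwise the first player empties `s + 1 — s + 2`, restoring the invariant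
at `s + 2`. At `s = n` the opponent has no move.
-/

/-- A position of Nim on graphs: a symmetric non-negative integer weight
function on pairs of vertices (the weighted graph; weight-zero pairs are
non-edges) plus the location of the indicator piece. -/
structure NimPos (V : Type) where
  w : V → V → ℕ
  symm : ∀ u v, w u v = w v u
  pos : V

/-- A legal move: decrease the weight of an edge incident with the piece to a
strictly smaller value and move the piece along it; all other weights stay. -/
def NimMove {V : Type} (p q : NimPos V) : Prop :=
  p.pos ≠ q.pos ∧
  q.w p.pos q.pos < p.w p.pos q.pos ∧
  ∀ u v, ¬((u = p.pos ∧ v = q.pos) ∨ (u = q.pos ∧ v = p.pos)) → q.w u v = p.w u v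

/-- The player to move loses (the position is a 0-position): the opponent has
a winning strategy `f` answering every move. -/
inductive MoverLoses {V : Type} : NimPos V → Prop
  | intro (p : NimPos V) (f : ∀ q, NimMove p q → NimPos V)
      (hmove : ∀ q (h : NimMove p q), NimMove q (f q h))
      (hwin : ∀ q (h : NimMove p q), MoverLoses (f q h)) : MoverLoses p

/-- The player to move wins (the position is a p-position). -/
def MoverWins {V : Type} (p : NimPos V) : Prop :=
  ∃ q, NimMove p q ∧ MoverLoses q

/-- Weights of the path on vertices `0,…,n` of `Fin (n+1)`: edge `i — i+1` has weight `ω i`. -/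
def pathW (n : ℕ) (ω : ℕ → ℕ) (u v : Fin (n+1)) : ℕ :=
  if u.val + 1 = v.val then ω u.val
  else if v.val + 1 = u.val then ω v.val else 0

theorem pathW_symm (n : ℕ) (ω : ℕ → ℕ) : ∀ u v, pathW n ω u v = pathW n ω v u := by
  intro u v; unfold pathW; split_ifs <;> first | rfl | (exfalso; omega)

/-- Weights of the cycle on `Fin m` (`m ≥ 3`): edge `i — (i+1) % m` has weight `ω i`. -/
def cycW (m : ℕ) (ω : ℕ → ℕ) (u v : Fin m) : ℕ :=
  (if (u.val + 1) % m = v.val then ω u.val else 0) +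
  (if (v.val + 1) % m = u.val then ω v.val else 0)

theorem cycW_symm (m : ℕ) (ω : ℕ → ℕ) : ∀ u v, cycW m ω u v = cycW m ω v u :=
  fun _ _ => Nat.add_comm _ _

/-- Weight-1 complete bipartite graph `K_{2,j}`: part `{0,1}` and part `{2,…,j+1}`. -/
def k2W (j : ℕ) (u v : Fin (j+2)) : ℕ :=
  if (u.val < 2 ∧ 2 ≤ v.val) ∨ (v.val < 2 ∧ 2 ≤ u.val) then 1 else 0

theorem k2W_symm (j : ℕ) : ∀ u v, k2W j u v = k2W j v u := by
  intro u v; unfold k2W; split_ifs <;> omega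

/-- Weight-1 `SSB_j = K_{2,j} + e_{12}`: `K_{2,j}` plus the edge `0 — 1`. -/
def ssbW (j : ℕ) (u v : Fin (j+2)) : ℕ :=
  if ((u.val < 2 ∧ 2 ≤ v.val) ∨ (v.val < 2 ∧ 2 ≤ u.val)) ∨
      (u.val < 2 ∧ v.val < 2 ∧ u.val ≠ v.val) then 1 else 0

theorem ssbW_symm (j : ℕ) : ∀ u v, ssbW j u v = ssbW j v u := by
  intro u v; unfold ssbW; split_ifs <;> omega

/-- Weight-1 complete graph `K_n`. -/
def knW (n : ℕ) (u v : Fin n) : ℕ := if u.val ≠ v.val then 1 else 0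

theorem knW_symm (n : ℕ) : ∀ u v, knW n u v = knW n v u := by
  intro u v; unfold knW; split_ifs <;> omega

/-- Length of the maximal all-positive run of cycle edges clockwise from vertex `s`. -/
noncomputable def fwdLen (m : ℕ) (w : ℕ → ℕ) (s : ℕ) : ℕ :=
  sSup {d | d ≤ m ∧ ∀ i < d, 0 < w ((s + i) % m)}

/-- Length of the maximal all-positive run of cycle edges counterclockwise from vertex `s`. -/
noncomputable def bwdLen (m : ℕ) (w : ℕ → ℕ) (s : ℕ) : ℕ :=
  sSup {d | d ≤ m ∧ ∀ i < d, 0 < w ((s + m - 1 - i) % m)}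

section General

variable {V : Type}

theorem MoverLoses.of_forall_moverWins {p : NimPos V}
    (h : ∀ q, NimMove p q → MoverWins q) : MoverLoses p :=
  .intro p (fun q hq => (h q hq).choose) (fun q hq => (h q hq).choose_spec.1)
    (fun q hq => (h q hq).choose_spec.2)

theorem MoverLoses.of_forall_eq_zero {p : NimPos V} (h : ∀ t, p.w p.pos t = 0) :
    MoverLoses p :=
  of_forall_moverWins fun q hq => absurd hq.2.1 (by simp [h])

variable [DecidableEq V]

def zeroEdge (w : V → V → ℕ) (x y : V) : V → V → ℕ :=
  fun u v => if (u = x ∧ v = y) ∨ (u = y ∧ v = x) then 0 else w u v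

theorem zeroEdge_symm {w : V → V → ℕ} (hw : ∀ u v, w u v = w v u) (x y : V) (u v : V) :
    zeroEdge w x y u v = zeroEdge w x y v u := by
  unfold zeroEdge
  split_ifs <;> first | rfl | tauto

def NimPos.moveZero (q : NimPos V) (t : V) : NimPos V :=
  ⟨zeroEdge q.w q.pos t, zeroEdge_symm q.symm q.pos t, t⟩

theorem nimMove_moveZero {q : NimPos V} {t : V} (hne : q.pos ≠ t) (hpos : 0 < q.w q.pos t) :
    NimMove q (q.moveZero t) :=
  ⟨hne, by simpa [NimPos.moveZero, zeroEdge] using hpos,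
    fun _ _ huv => if_neg huv⟩

theorem NimMove.w_eq_zeroEdge {p q : NimPos V} (h : NimMove p q) (h0 : q.w p.pos q.pos = 0) :
    q.w = zeroEdge p.w p.pos q.pos := by
  funext u v
  unfold zeroEdge
  split_ifs with huv
  · rcases huv with ⟨rfl, rfl⟩ | ⟨rfl, rfl⟩
    · exact h0
    · rw [q.symm]; exact h0
  · exact h.2.2 u v huv

theorem moverLoses_moveZero_back {p q : NimPos V} (h : NimMove p q)
    (hleaf : ∀ t, t ≠ q.pos → p.w p.pos t = 0) : MoverLoses (q.moveZero p.pos) := by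
  refine MoverLoses.of_forall_eq_zero fun t => ?_
  show (if _ then 0 else _) = 0
  split_ifs with ht
  · rfl
  · have htq : t ≠ q.pos := fun htq => ht (Or.inr ⟨rfl, htq⟩)
    rw [h.2.2 _ _ (by rintro (⟨-, rfl⟩ | ⟨h1, -⟩); exacts [htq rfl, h.1 h1])]
    exact hleaf t htq

end General

section Path

variable {m : ℕ}

def IsTailEdge (s : ℕ) (u v : Fin m) : Prop :=
  s ≤ u.val ∧ s ≤ v.val ∧ (u.val + 1 = v.val ∨ v.val + 1 = u.val)

def SupportedOnTail (s : ℕ) (w : Fin m → Fin m → ℕ) : Prop :=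
  ∀ u v, 0 < w u v ↔ IsTailEdge s u v

theorem pathW_supportedOnTail {n : ℕ} {ω : ℕ → ℕ} (hω : ∀ i < n, 0 < ω i) :
    SupportedOnTail 0 (pathW n ω) := by
  intro u v
  unfold pathW IsTailEdge
  have := u.isLt; have := v.isLt
  split_ifs
  · simp only [hω u.val (by omega), true_iff]; omega
  · simp only [hω v.val (by omega), true_iff]; omega
  · simp only [lt_self_iff_false, false_iff]; omega

theorem SupportedOnTail.zeroEdge {w : Fin m → Fin m → ℕ} {x y : Fin m}
    (h : SupportedOnTail x.val w) (hxy : y.val = x.val + 1) :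
    SupportedOnTail y.val (zeroEdge w x y) := by
  intro u v
  unfold _root_.zeroEdge IsTailEdge
  simp only [Fin.ext_iff]
  split_ifs with huv
  · simp only [lt_self_iff_false, false_iff]; omega
  · rw [h u v, IsTailEdge]; omega

theorem SupportedOnTail.val_eq_succ_of_pos {w : Fin m → Fin m → ℕ} {x y : Fin m}
    (h : SupportedOnTail x.val w) (hxy : 0 < w x y) : y.val = x.val + 1 := by
  have := (h x y).1 hxy
  unfold IsTailEdge at this
  omega

variable {n : ℕ}

theorem SupportedOnTail.moverLoses {p : NimPos (Fin (n + 1))} {k : ℕ} (hk : p.pos.val + 2 * k = n)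
    (h : SupportedOnTail p.pos.val p.w) : MoverLoses p := by
  induction k generalizing p with
  | zero =>
    refine MoverLoses.of_forall_eq_zero fun t => Nat.eq_zero_of_not_pos fun ht => ?_
    have := h.val_eq_succ_of_pos ht
    omega
  | succ k ih =>
    refine MoverLoses.of_forall_moverWins fun q hq => ?_
    have hq1 : q.pos.val = p.pos.val + 1 := h.val_eq_succ_of_pos (Nat.zero_lt_of_lt hq.2.1)
    by_cases h0 : q.w p.pos q.pos = 0
    · have hq' : SupportedOnTail q.pos.val q.w := hq.w_eq_zeroEdge h0 ▸ h.zeroEdge hq1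
      let r : Fin (n + 1) := ⟨q.pos.val + 1, by omega⟩
      have hqr : IsTailEdge q.pos.val q.pos r := by simp [IsTailEdge, r]
      exact ⟨q.moveZero r, nimMove_moveZero (by simp [Fin.ext_iff, r]) ((hq' _ _).2 hqr),
        ih (by simp only [NimPos.moveZero, r]; omega) (hq'.zeroEdge rfl)⟩
    · refine ⟨q.moveZero p.pos, nimMove_moveZero (Ne.symm hq.1) (by rw [q.symm]; omega),
        moverLoses_moveZero_back hq fun t ht => Nat.eq_zero_of_not_pos fun hpt => ht ?_⟩
      exact Fin.ext ((h.val_eq_succ_of_pos hpt).trans hq1.symm)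

end Path

/-- Nim on a path with an odd number `n` of edges, all weights
positive, piece starting at an endpoint: the first player wins. -/
theorem stmt0 (n : ℕ) (hn : Odd n) (ω : ℕ → ℕ) (hω : ∀ i < n, 0 < ω i) :
    MoverWins ⟨pathW n ω, pathW_symm n ω, (0 : Fin (n+1))⟩ := by
  obtain ⟨k, rfl⟩ := hn
  have h₀ := pathW_supportedOnTail hω
  have h₀₁ : IsTailEdge 0 (0 : Fin (2 * k + 1 + 1)) ⟨1, by omega⟩ := by simp [IsTailEdge]
  refine ⟨_, nimMove_moveZero (by simp) ((h₀ _ _).2 h₀₁), ?_⟩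
  exact SupportedOnTail.moverLoses (k := k) (by simp only [NimPos.moveZero]; omega) (h₀.zeroEdge rfl)
end

section
/- In Nim on graphs played on a path with an even number of edges, all of whose edges have positive integer weight, with the indicator piece starting at an endpoint, the second player (the player not to move) has a winning strategy; i.e., the starting position is a 0-position. -/
/-!
Along a path with vertices `0, …, n`, the second player keeps the following invariant: all weight
lies on path edges, the piece stands at a vertex `2k` with `n - 2k` even, the edge to its left is
empty, and every edge to its right is still positive. The mover is then forced to step right to
`2k + 1`, and the reply empties the edge `2k+1 — 2k+2` while moving onto `2k + 2`, restoring the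
invariant. When `2k = n` the mover is stuck.
-/

namespace NimPos

variable {V : Type}

def moveTo [DecidableEq V] (p : NimPos V) (b : V) (m : ℕ) : NimPos V where
  w u v := if s(u, v) = s(p.pos, b) then m else p.w u v
  symm u v := by rw [Sym2.eq_swap, p.symm]
  pos := b

@[simp]
theorem moveTo_pos [DecidableEq V] (p : NimPos V) (b : V) (m : ℕ) : (p.moveTo b m).pos = b := rfl

theorem nimMove_moveTo [DecidableEq V] {p : NimPos V} {b : V} {m : ℕ} (hb : p.pos ≠ b)
    (hm : m < p.w p.pos b) : NimMove p (p.moveTo b m) := by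
  refine ⟨hb, by simpa [moveTo] using hm, fun u v huv => ?_⟩
  rw [← Sym2.eq_iff] at huv
  exact if_neg huv

end NimPos

namespace NimMove

variable {V : Type} {p q : NimPos V}

theorem w_pos (h : NimMove p q) : 0 < p.w p.pos q.pos :=
  Nat.zero_lt_of_lt h.2.1

theorem w_eq_of_ne (h : NimMove p q) {u v : V} (huv : s(u, v) ≠ s(p.pos, q.pos)) :
    q.w u v = p.w u v :=
  h.2.2 u v (by rwa [← Sym2.eq_iff])

theorem w_le (h : NimMove p q) (u v : V) : q.w u v ≤ p.w u v := by
  by_cases huv : s(u, v) = s(p.pos, q.pos)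
  · rcases Sym2.eq_iff.mp huv with ⟨rfl, rfl⟩ | ⟨rfl, rfl⟩
    · exact h.2.1.le
    · rw [q.symm, p.symm]; exact h.2.1.le
  · exact (h.w_eq_of_ne huv).le

end NimMove

theorem MoverLoses.of_forall_nimMove_exists {V : Type} {p : NimPos V}
    (h : ∀ q, NimMove p q → ∃ r, NimMove q r ∧ MoverLoses r) : MoverLoses p := by
  choose f hmove hwin using h
  exact .intro p f hmove hwin

theorem MoverLoses.of_forall_not_nimMove {V : Type} {p : NimPos V} (h : ∀ q, ¬NimMove p q) :
    MoverLoses p :=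
  .of_forall_nimMove_exists fun q hq => (h q hq).elim

structure OnIntactSuffix {n : ℕ} (p : NimPos (Fin (n + 1))) : Prop where
  adjacent_of_ne_zero : ∀ u v, p.w u v ≠ 0 → u.val + 1 = v.val ∨ v.val + 1 = u.val
  pos_right : ∀ u v, p.pos.val ≤ u.val → u.val + 1 = v.val → 0 < p.w u v
  zero_left : ∀ u, u.val + 1 = p.pos.val → p.w u p.pos = 0

namespace OnIntactSuffix

variable {n : ℕ} {p q : NimPos (Fin (n + 1))}

theorem val_pos_of_nimMove (hp : OnIntactSuffix p) (hq : NimMove p q) :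
    q.pos.val = p.pos.val + 1 := by
  have hw := hq.w_pos
  rcases hp.adjacent_of_ne_zero _ _ hw.ne' with h | h
  · exact h.symm
  · have := hp.zero_left q.pos h
    rw [p.symm] at this
    omega

theorem reply (hp : OnIntactSuffix p) (hq : NimMove p q) (b : Fin (n + 1))
    (hb : b.val = p.pos.val + 2) :
    NimMove q (q.moveTo b 0) ∧ OnIntactSuffix (q.moveTo b 0) := by
  have hqpos := hp.val_pos_of_nimMove hq
  have hqb : q.w q.pos b = p.w q.pos b :=
    hq.w_eq_of_ne (by simp only [ne_eq, Sym2.eq_iff, Fin.ext_iff]; omega)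
  have hmove : NimMove q (q.moveTo b 0) :=
    NimPos.nimMove_moveTo (by rw [ne_eq, Fin.ext_iff]; omega)
      (hqb ▸ hp.pos_right _ _ (by omega) (by omega))
  refine ⟨hmove, ⟨fun u v huv => ?_, fun u v hu huv => ?_, fun u hu => ?_⟩⟩
  · exact hp.adjacent_of_ne_zero u v fun h0 =>
      huv (Nat.le_zero.mp (h0 ▸ (hmove.w_le u v).trans (hq.w_le u v)))
  · rw [NimPos.moveTo_pos] at hu
    have hne : s(u, v) ≠ s(q.pos, b) := by
      simp only [ne_eq, Sym2.eq_iff, Fin.ext_iff]; omega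
    rw [hmove.w_eq_of_ne hne, hq.w_eq_of_ne (by simp only [ne_eq, Sym2.eq_iff, Fin.ext_iff]; omega)]
    exact hp.pos_right u v (by omega) huv
  · have hu' : u = q.pos := Fin.ext (by rw [NimPos.moveTo_pos] at hu; omega)
    subst hu'
    exact if_pos rfl

theorem moverLoses (hp : OnIntactSuffix p) (heven : Even (n - p.pos.val)) : MoverLoses p := by
  obtain ⟨d, hd⟩ := heven
  induction d generalizing p with
  | zero =>
    refine .of_forall_not_nimMove fun q hq => ?_
    have := hp.val_pos_of_nimMove hq
    omega
  | succ d ih =>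
    refine .of_forall_nimMove_exists fun q hq => ?_
    obtain ⟨hmove, hr⟩ := hp.reply hq ⟨p.pos.val + 2, by omega⟩ rfl
    exact ⟨_, hmove, ih hr (by simp only [NimPos.moveTo_pos]; omega)⟩

end OnIntactSuffix

theorem onIntactSuffix_pathW (n : ℕ) (ω : ℕ → ℕ) (hω : ∀ i < n, 0 < ω i) :
    OnIntactSuffix (⟨pathW n ω, pathW_symm n ω, 0⟩ : NimPos (Fin (n + 1))) where
  adjacent_of_ne_zero u v h := by
    change pathW n ω u v ≠ 0 at h
    unfold pathW at h
    split_ifs at h <;> omega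
  pos_right u v _ huv := by
    simp only [pathW, if_pos huv]
    exact hω u.val (by omega)
  zero_left u hu := by simp at hu

/-- Nim on a path with an even number `n` of edges, all weights
positive, piece starting at an endpoint: the starting position is a 0-position
(the second player wins). -/
theorem stmt1 (n : ℕ) (hn : Even n) (ω : ℕ → ℕ) (hω : ∀ i < n, 0 < ω i) :
    MoverLoses ⟨pathW n ω, pathW_symm n ω, (0 : Fin (n+1))⟩ :=
  (onIntactSuffix_pathW n ω hω).moverLoses hn
end

section
/- In Nim on graphs played on a path, if the indicator piece starts at an interior vertex such that both subpaths from the piece to the two endpoints have an even number of edges, then the position is a 0-position (the player to move loses under optimal play). -/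
/-!
The second player keeps the piece at a vertex that splits its component of positive-weight
edges into two paths of even length. If the first player leaves the edge just used positive,
the second player walks straight back along it and empties it; if the first player empties it,
parity guarantees a next positive edge in the same direction, and the second player walks along
it and empties it. Either way the invariant is restored, and since every move lowers the total
weight, the first player is eventually stuck.
-/

namespace NimPos

variable {V : Type}

def totalWeight [Fintype V] (p : NimPos V) : ℕ := ∑ x : V × V, p.w x.1 x.2

lemma ext {p q : NimPos V} (hw : p.w = q.w) (hpos : p.pos = q.pos) : p = q := by
  cases p; cases q; cases hw; cases hpos; rfl

end NimPos

section Game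

variable {V : Type}

lemma NimMove.totalWeight_lt [Fintype V] {p q : NimPos V} (h : NimMove p q) :
    q.totalWeight < p.totalWeight := by
  obtain ⟨-, hlt, hrest⟩ := h
  have hle : ∀ u v, q.w u v ≤ p.w u v := by
    intro u v
    by_cases huv : (u = p.pos ∧ v = q.pos) ∨ (u = q.pos ∧ v = p.pos)
    · rcases huv with ⟨rfl, rfl⟩ | ⟨rfl, rfl⟩
      · exact hlt.le
      · rw [p.symm, q.symm]; exact hlt.le
    · exact (hrest u v huv).le
  exact Finset.sum_lt_sum (fun x _ => hle x.1 x.2) ⟨(p.pos, q.pos), Finset.mem_univ _, hlt⟩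

theorem MoverLoses.of_invariant [Fintype V] (S : NimPos V → Prop)
    (hS : ∀ p, S p → ∀ q, NimMove p q → ∃ r, NimMove q r ∧ S r) :
    ∀ p, S p → MoverLoses p := by
  intro p
  induction hp : p.totalWeight using Nat.strong_induction_on generalizing p with
  | _ T IH =>
    intro hSp
    choose f hmove hSf using hS p hSp
    refine MoverLoses.intro p f hmove fun q hq => IH _ ?_ _ rfl (hSf q hq)
    exact hp ▸ (hmove q hq).totalWeight_lt.trans hq.totalWeight_lt

end Game

section Path

open Function

variable {n : ℕ}

def pathPos (n : ℕ) (ω : ℕ → ℕ) (s : Fin (n+1)) : NimPos (Fin (n+1)) :=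
  ⟨pathW n ω, pathW_symm n ω, s⟩

@[simp] lemma pathPos_w (ω : ℕ → ℕ) (s : Fin (n+1)) : (pathPos n ω s).w = pathW n ω := rfl

@[simp] lemma pathPos_pos (ω : ℕ → ℕ) (s : Fin (n+1)) : (pathPos n ω s).pos = s := rfl

def PathEdge (k : ℕ) (u v : Fin (n+1)) : Prop :=
  (u.val = k ∧ v.val = k + 1) ∨ (u.val = k + 1 ∧ v.val = k)

lemma PathEdge.eq_or_eq {k : ℕ} {u v t t' : Fin (n+1)} (huv : PathEdge k u v)
    (htt' : PathEdge k t t') : (u = t ∧ v = t') ∨ (u = t' ∧ v = t) := by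
  simp only [PathEdge, Fin.ext_iff] at *
  omega

lemma PathEdge.symm {k : ℕ} {u v : Fin (n+1)} (h : PathEdge k u v) : PathEdge k v u := by
  unfold PathEdge at *
  omega

lemma pathW_of_pathEdge {ω : ℕ → ℕ} {k : ℕ} {u v : Fin (n+1)} (h : PathEdge k u v) :
    pathW n ω u v = ω k := by
  unfold pathW
  rcases h with ⟨hu, hv⟩ | ⟨hu, hv⟩ <;> rw [hu, hv] <;> split_ifs <;> first | rfl | omega

lemma pathEdge_of_pathW_pos {ω : ℕ → ℕ} {u v : Fin (n+1)} (h : 0 < pathW n ω u v) :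
    ∃ k, PathEdge k u v := by
  unfold pathW at h
  split_ifs at h with h₁ h₂
  · exact ⟨u.val, Or.inl ⟨rfl, h₁.symm⟩⟩
  · exact ⟨v.val, Or.inr ⟨h₂.symm, rfl⟩⟩
  · omega

lemma pathW_update_of_not_pathEdge {ω : ℕ → ℕ} {k c : ℕ} {u v : Fin (n+1)}
    (h : ¬PathEdge k u v) : pathW n (update ω k c) u v = pathW n ω u v := by
  unfold pathW PathEdge at *
  simp only [update_apply]
  split_ifs <;> omega

lemma nimMove_pathPos {ω : ℕ → ℕ} {k c : ℕ} {t t' : Fin (n+1)} (hedge : PathEdge k t t')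
    (hc : c < ω k) : NimMove (pathPos n ω t) (pathPos n (update ω k c) t') := by
  refine ⟨?_, ?_, fun u v huv => ?_⟩
  · rintro rfl
    simp only [PathEdge, pathPos_pos] at hedge
    omega
  · simpa [pathW_of_pathEdge hedge] using hc
  · exact pathW_update_of_not_pathEdge fun h => huv (h.eq_or_eq hedge)

lemma NimMove.eq_pathPos {ω : ℕ → ℕ} {s : Fin (n+1)} {q : NimPos (Fin (n+1))}
    (h : NimMove (pathPos n ω s) q) :
    ∃ k c, PathEdge k s q.pos ∧ c < ω k ∧ q = pathPos n (update ω k c) q.pos := by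
  obtain ⟨-, hlt, hrest⟩ := h
  simp only [pathPos_pos, pathPos_w] at hlt hrest
  obtain ⟨k, hk⟩ := pathEdge_of_pathW_pos (lt_of_le_of_lt (Nat.zero_le _) hlt)
  refine ⟨k, q.w s q.pos, hk, (pathW_of_pathEdge hk).subst hlt,
    NimPos.ext (funext₂ fun u v => ?_) rfl⟩
  by_cases huv : (u = s ∧ v = q.pos) ∨ (u = q.pos ∧ v = s)
  · rcases huv with ⟨rfl, rfl⟩ | ⟨rfl, rfl⟩
    · simp [pathW_of_pathEdge hk]
    · simp [pathW_of_pathEdge hk.symm, q.symm q.pos]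
  · rw [hrest u v huv]
    exact (pathW_update_of_not_pathEdge fun h => huv (h.eq_or_eq hk)).symm

end Path

section Invariant

open Function

variable {n : ℕ} {ω : ℕ → ℕ}

/-- The vertices `l, …, r` of the path form a connected component of its positive-weight
edges. -/
def IsPosRun (n : ℕ) (ω : ℕ → ℕ) (l r : ℕ) : Prop :=
  r ≤ n ∧ (∀ i, l ≤ i → i < r → 0 < ω i) ∧ (l = 0 ∨ ω (l - 1) = 0) ∧ (r = n ∨ ω r = 0)

def EvenlySplits (n : ℕ) (ω : ℕ → ℕ) (s : ℕ) : Prop :=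
  ∃ l r, IsPosRun n ω l r ∧ l ≤ s ∧ s ≤ r ∧ Even (s - l) ∧ Even (r - s)

lemma EvenlySplits.cut_right {s : ℕ} (h : EvenlySplits n ω s) :
    EvenlySplits n (update ω s 0) s := by
  obtain ⟨l, r, ⟨hrn, hpos, hl, -⟩, hls, hsr, hel, -⟩ := h
  refine ⟨l, s, ⟨by omega, fun i hi hi' => ?_, ?_, by simp⟩, hls, le_rfl, hel, by simp⟩
  · rw [update_of_ne (by omega)]; exact hpos i hi (by omega)
  · rcases hl with hl | hl
    · exact Or.inl hl
    · right; rw [update_apply]; split_ifs <;> omega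

lemma EvenlySplits.cut_left {k : ℕ} (h : EvenlySplits n ω (k + 1)) :
    EvenlySplits n (update ω k 0) (k + 1) := by
  obtain ⟨l, r, ⟨hrn, hpos, -, hr⟩, hls, hsr, -, her⟩ := h
  refine ⟨k + 1, r, ⟨hrn, fun i hi hi' => ?_, by simp, ?_⟩, le_rfl, hsr, by simp, her⟩
  · rw [update_of_ne (by omega)]; exact hpos i (by omega) hi'
  · rcases hr with hr | hr
    · exact Or.inl hr
    · right; rw [update_apply]; split_ifs <;> omega

lemma EvenlySplits.cut_two_right {k : ℕ} (h : EvenlySplits n ω k) (hkn : k < n) (hk : 0 < ω k) :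
    k + 2 ≤ n ∧ 0 < ω (k + 1) ∧
      EvenlySplits n (update (update ω k 0) (k + 1) 0) (k + 2) := by
  obtain ⟨l, r, ⟨hrn, hpos, -, hr⟩, hls, hkr, -, ⟨m, hm⟩⟩ := h
  have hkr' : k ≠ r := by rintro rfl; rcases hr with hr | hr <;> omega
  refine ⟨by omega, hpos (k + 1) (by omega) (by omega),
    k + 2, r, ⟨hrn, fun i hi hi' => ?_, by simp, ?_⟩, le_rfl, by omega, by simp, ⟨m - 1, by omega⟩⟩
  · rw [update_of_ne (by omega), update_of_ne (by omega)]; exact hpos i (by omega) hi'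
  · rw [update_of_ne (by omega), update_of_ne (by omega)]; exact hr

lemma EvenlySplits.cut_two_left {k : ℕ} (h : EvenlySplits n ω (k + 1)) (hk : 0 < ω k) :
    1 ≤ k ∧ 0 < ω (k - 1) ∧
      EvenlySplits n (update (update ω k 0) (k - 1) 0) (k - 1) := by
  obtain ⟨l, r, ⟨hrn, hpos, hl, -⟩, hlk, hkr, ⟨m, hm⟩, -⟩ := h
  have hlk' : l ≠ k + 1 := by
    rintro rfl
    rcases hl with hl | hl
    · omega
    · rw [Nat.add_sub_cancel] at hl; omega
  refine ⟨by omega, hpos (k - 1) (by omega) (by omega),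
    l, k - 1, ⟨by omega, fun i hi hi' => ?_, ?_, by simp⟩, by omega, le_rfl, ⟨m - 1, by omega⟩,
    by simp⟩
  · rw [update_of_ne (by omega), update_of_ne (by omega)]; exact hpos i hi (by omega)
  · rcases hl with hl | hl
    · exact Or.inl hl
    · right; simp only [update_apply]; split_ifs <;> first | rfl | exact hl

lemma EvenlySplits.exists_response {s : Fin (n+1)} (h : EvenlySplits n ω s)
    {q : NimPos (Fin (n+1))} (hq : NimMove (pathPos n ω s) q) :
    ∃ ω' s', NimMove q (pathPos n ω' s') ∧ EvenlySplits n ω' s' := by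
  obtain ⟨k, c, hk, hc, hq⟩ := hq.eq_pathPos
  rw [hq]
  generalize q.pos = t at hk ⊢
  have hback : 0 < c → NimMove (pathPos n (update ω k c) t) (pathPos n (update ω k 0) s) :=
    fun hc0 => update_idem c 0 ω ▸ nimMove_pathPos hk.symm (by simpa using hc0)
  rcases Nat.eq_zero_or_pos c with rfl | hc0
  · rcases hk with ⟨hs, ht⟩ | ⟨hs, ht⟩
    · rw [hs] at h
      obtain ⟨hkn, hpos, hsplit⟩ := h.cut_two_right (by omega) hc
      exact ⟨_, ⟨k + 2, by omega⟩, nimMove_pathPos (k := k + 1) (Or.inl ⟨ht, rfl⟩)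
        (by rwa [update_of_ne (by omega)]), hsplit⟩
    · rw [hs] at h
      obtain ⟨hk1, hpos, hsplit⟩ := h.cut_two_left hc
      exact ⟨_, ⟨k - 1, by omega⟩, nimMove_pathPos (k := k - 1) (Or.inr ⟨by omega, rfl⟩)
        (by rwa [update_of_ne (by omega)]), hsplit⟩
  · refine ⟨_, s, hback hc0, ?_⟩
    rcases hk with ⟨hs, -⟩ | ⟨hs, -⟩ <;> rw [hs] at h ⊢
    · exact h.cut_right
    · exact h.cut_left

end Invariant

theorem stmt2_general (n : ℕ) (ω : ℕ → ℕ) (hω : ∀ i < n, 0 < ω i) (s : Fin (n+1))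
    (he1 : Even s.val) (he2 : Even (n - s.val)) :
    MoverLoses ⟨pathW n ω, pathW_symm n ω, s⟩ := by
  have hrun : IsPosRun n ω 0 n := ⟨le_rfl, fun i _ hi => hω i hi, Or.inl rfl, Or.inl rfl⟩
  refine MoverLoses.of_invariant (fun p => ∃ ω s, p = pathPos n ω s ∧ EvenlySplits n ω s)
    ?_ _ ⟨ω, s, rfl, 0, n, hrun, Nat.zero_le _, by omega, he1, he2⟩
  rintro _ ⟨ω₀, s₀, rfl, h⟩ q hq
  obtain ⟨ω', s', hmove, h'⟩ := h.exists_response hq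
  exact ⟨_, hmove, ω', s', rfl, h'⟩

/-- Nim on a path with `n` edges and positive weights, piece at
an interior vertex `s` with both subpaths to the endpoints (of lengths `s` and
`n - s`) even: the position is a 0-position. -/
theorem stmt2 (n : ℕ) (ω : ℕ → ℕ) (hω : ∀ i < n, 0 < ω i) (s : Fin (n+1))
    (hint : 0 < s.val ∧ s.val < n)
    (he1 : Even s.val) (he2 : Even (n - s.val)) :
    MoverLoses ⟨pathW n ω, pathW_symm n ω, s⟩ :=
  stmt2_general n ω hω s he1 he2
end

section
/- Let G be the even cycle C_{2n} with positive integer weight assignment ω, let m = min over edges e of ω(e), and let G' be the weighted graph on the same vertices with weights ω'(e) = ω(e) − m (edges of weight 0 deleted), played from the same starting vertex. Then a position of Nim on graphs in G is a p-position (first-player win) if and only if the corresponding position in G' is a p-position; equivalently, the first player wins G if and only if there is an odd-length path from the starting vertex to a leaf in G', and the second player wins G if and only if every maximal path from the starting vertex in G' has even length. -/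
/-!
Write `μ` for the minimum weight. The predicate "after subtracting `μ` from every edge, one of the
two paths of positive edges leaving the piece has odd length" is a kernel of the game on an even
cycle. If it holds, lower the first edge of an odd path to `μ`: from the new vertex the path ahead
is one edge shorter, hence even, and the path behind starts with an edge of reduced weight `0`.
If it fails, every move produces an odd path ahead: when the minimum stays `μ` the even path ahead
loses its first edge, and when the edge is lowered below `μ` it becomes the unique minimum, so the
path ahead is the rest of the cycle, of odd length `2n - 1`. As subtracting `μ` leaves the
predicate unchanged, `G` and `G'` have the same winner.
-/

section Game

variable {V : Type}

theorem MoverLoses.not_moverWins {p : NimPos V} (h : MoverLoses p) : ¬ MoverWins p := by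
  suffices ∀ q, NimMove p q → ¬ MoverLoses q from fun ⟨q, hq, hlq⟩ => this q hq hlq
  induction h with
  | intro p f hmove _ ih =>
    rintro q hq ⟨q, g, gmove, gwin⟩
    exact ih q hq _ (gmove _ (hmove q hq)) (gwin _ _)

theorem NimMove.w_eq [DecidableEq V] {p q : NimPos V} (h : NimMove p q) (u v : V) :
    q.w u v = if (u = p.pos ∧ v = q.pos) ∨ (u = q.pos ∧ v = p.pos)
      then q.w p.pos q.pos else p.w u v := by
  split_ifs with huv
  · rcases huv with ⟨rfl, rfl⟩ | ⟨rfl, rfl⟩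
    · rfl
    · exact q.symm _ _
  · exact h.2.2 u v huv

theorem NimMove.w_le_s6 {p q : NimPos V} (h : NimMove p q) (u v : V) : q.w u v ≤ p.w u v := by
  by_cases huv : (u = p.pos ∧ v = q.pos) ∨ (u = q.pos ∧ v = p.pos)
  · rcases huv with ⟨rfl, rfl⟩ | ⟨rfl, rfl⟩
    · exact h.2.1.le
    · rw [p.symm, q.symm]; exact h.2.1.le
  · exact (h.2.2 u v huv).le

def NimPos.weightSum [Fintype V] (p : NimPos V) : ℕ := ∑ u, ∑ v, p.w u v

theorem NimMove.weightSum_lt [Fintype V] {p q : NimPos V} (h : NimMove p q) :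
    q.weightSum < p.weightSum :=
  Finset.sum_lt_sum (fun u _ => Finset.sum_le_sum fun v _ => h.w_le_s6 u v)
    ⟨p.pos, Finset.mem_univ _,
      Finset.sum_lt_sum (fun v _ => h.w_le_s6 _ v) ⟨q.pos, Finset.mem_univ _, h.2.1⟩⟩

theorem moverWins_iff_of_kernel [Fintype V] {ι : Type} (pos : ι → NimPos V) (W : ι → Prop)
    (hwin : ∀ i, W i → ∃ j, NimMove (pos i) (pos j) ∧ ¬ W j)
    (hlose : ∀ i q, ¬ W i → NimMove (pos i) q → ∃ j, q = pos j ∧ W j) (i : ι) :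
    MoverWins (pos i) ↔ W i := by
  have key : ∀ i, (W i → MoverWins (pos i)) ∧ (¬ W i → MoverLoses (pos i)) := by
    intro i
    induction h : (pos i).weightSum using Nat.strong_induction_on generalizing i with
    | _ N ih =>
      subst h
      refine ⟨fun hW => ?_, fun hW => ?_⟩
      · obtain ⟨j, hij, hj⟩ := hwin i hW
        exact ⟨pos j, hij, (ih _ hij.weightSum_lt j rfl).2 hj⟩
      · have reply : ∀ q, NimMove (pos i) q → MoverWins q := by
          intro q hq
          obtain ⟨j, rfl, hj⟩ := hlose i q hW hq
          exact (ih _ hq.weightSum_lt j rfl).1 hj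
        choose f hmove hwin' using reply
        exact MoverLoses.intro _ f hmove hwin'
  exact ⟨fun h => by_contra fun hW => ((key i).2 hW).not_moverWins h, (key i).1⟩

end Game

section PositiveRun

noncomputable def posRun (m : ℕ) (f : ℕ → ℕ) : ℕ :=
  sSup {d | d ≤ m ∧ ∀ i < d, 0 < f i}

variable {m : ℕ} {f g : ℕ → ℕ}

theorem posRun_mem : posRun m f ∈ {d | d ≤ m ∧ ∀ i < d, 0 < f i} :=
  Nat.sSup_mem ⟨0, by simp⟩ ⟨m, fun _ hd => hd.1⟩

theorem pos_of_lt_posRun {i : ℕ} (hi : i < posRun m f) : 0 < f i := posRun_mem.2 i hi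

theorem posRun_eq {d : ℕ} (hdm : d ≤ m) (hpos : ∀ i < d, 0 < f i)
    (hstop : d = m ∨ f d = 0) : posRun m f = d := by
  refine le_antisymm (csSup_le ⟨0, by simp⟩ fun e ⟨hem, he⟩ => ?_)
    (le_csSup ⟨m, fun _ hd => hd.1⟩ ⟨hdm, hpos⟩)
  by_contra! hde
  rcases hstop with rfl | hd
  · omega
  · exact (he d hde).ne' hd

theorem eq_zero_of_posRun_lt (h : posRun m f < m) : f (posRun m f) = 0 := by
  by_contra hne
  have hmem : posRun m f + 1 ∈ {d | d ≤ m ∧ ∀ i < d, 0 < f i} :=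
    ⟨h, fun i hi => (Nat.lt_succ_iff_lt_or_eq.mp hi).elim pos_of_lt_posRun
      fun hi => hi ▸ Nat.pos_of_ne_zero hne⟩
  have := le_csSup (⟨m, fun _ hd => hd.1⟩ : BddAbove {d | d ≤ m ∧ ∀ i < d, 0 < f i}) hmem
  exact (Nat.lt_succ_self _).not_ge this

theorem posRun_lt_of_eq_zero {j : ℕ} (hj : j < m) (h : f j = 0) : posRun m f < m := by
  by_contra! hm
  exact (pos_of_lt_posRun (hj.trans_le hm)).ne' h

theorem posRun_eq_zero (h : f 0 = 0) : posRun m f = 0 :=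
  posRun_eq (Nat.zero_le m) (fun _ hi => absurd hi (Nat.not_lt_zero _)) (Or.inr h)

theorem posRun_eq_pred (hpos : ∀ i < m - 1, 0 < f i) (hstop : f (m - 1) = 0) :
    posRun m f = m - 1 :=
  posRun_eq (Nat.sub_le m 1) hpos (Or.inr hstop)

theorem posRun_tail (h1 : 1 ≤ posRun m f) (hm : posRun m f < m)
    (hg : ∀ i < m - 1, g i = f (i + 1)) : posRun m g = posRun m f - 1 := by
  refine posRun_eq (d := posRun m f - 1) (by omega) (fun i hi => ?_) (Or.inr ?_)
  · rw [hg i (by omega)]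
    exact pos_of_lt_posRun (m := m) (by omega)
  · rw [hg _ (by omega), Nat.sub_add_cancel h1]
    exact eq_zero_of_posRun_lt hm

theorem odd_posRun_of_even {A A' : ℕ → ℕ} {μ k : ℕ} (hm : Even m)
    (hμ : ∀ i < m, μ ≤ A i) (hμA : ∃ j < m, A j = μ)
    (heven : Even (posRun m fun i => A i - μ)) (hk : k < A 0)
    (hA' : ∀ i < m - 1, A' i = A (i + 1)) (hlast : A' (m - 1) = k) :
    Odd (posRun m fun i => A' i - min k μ) := by
  obtain ⟨j, hj, hAj⟩ := hμA
  have hm0 : 0 < m := hj.pos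
  rcases lt_or_ge k μ with hkμ | hμk
  · rw [min_eq_left hkμ.le, posRun_eq_pred (fun i hi => ?_) (by simp [hlast])]
    · exact Nat.Even.sub_odd (by omega) hm odd_one
    · rw [hA' i hi]
      have := hμ (i + 1) (by omega)
      omega
  · rw [min_eq_right hμk]
    have hlt : (posRun m fun i => A i - μ) < m := posRun_lt_of_eq_zero hj (by simp [hAj])
    have h1 : 1 ≤ posRun m fun i => A i - μ := by
      by_contra! h0
      have := eq_zero_of_posRun_lt hlt
      simp only [Nat.lt_one_iff.mp h0] at this
      omega
    rw [posRun_tail h1 hlt fun i hi => by simp only [hA' i hi]]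
    exact Nat.Even.sub_odd (by omega) heven odd_one

theorem even_posRun_of_odd {A A' : ℕ → ℕ} {μ : ℕ} (hμA : ∃ j < m, A j = μ)
    (hodd : Odd (posRun m fun i => A i - μ)) (hA' : ∀ i < m - 1, A' i = A (i + 1)) :
    Even (posRun m fun i => A' i - μ) := by
  obtain ⟨j, hj, hAj⟩ := hμA
  have hlt : (posRun m fun i => A i - μ) < m := posRun_lt_of_eq_zero hj (by simp [hAj])
  rw [posRun_tail hodd.pos hlt fun i hi => by simp only [hA' i hi]]
  exact Nat.Odd.sub_odd hodd odd_one

end PositiveRun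

section CycleArithmetic

variable {m : ℕ}

theorem mod_eq_ite_of_lt_two_mul {x : ℕ} (hx : x < 2 * m) :
    x % m = if x < m then x else x - m := by
  split_ifs with h
  · exact Nat.mod_eq_of_lt h
  · rw [Nat.mod_eq_sub_mod (by omega), Nat.mod_eq_of_lt (by omega)]

theorem add_one_mod_eq_ite {u : ℕ} (hu : u < m) :
    (u + 1) % m = if u + 1 = m then 0 else u + 1 := by
  split_ifs with h
  · rw [h, Nat.mod_self]
  · exact Nat.mod_eq_of_lt (by omega)

theorem succ_mod_add_mod (s i : ℕ) : ((s + 1) % m + i) % m = (s + (i + 1)) % m := by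
  rw [Nat.mod_add_mod, add_assoc, add_comm 1 i]

theorem add_mod_ne_self {s j : ℕ} (hs : s < m) (hj0 : 0 < j) (hj : j < m) :
    (s + j) % m ≠ s := by
  rw [mod_eq_ite_of_lt_two_mul (by omega)]
  split_ifs <;> omega

theorem succ_mod_add_pred {s : ℕ} (hs : s < m) : ((s + 1) % m + (m - 1)) % m = s := by
  rw [succ_mod_add_mod, show s + (m - 1 + 1) = s + m by omega, Nat.add_mod_right,
    Nat.mod_eq_of_lt hs]

theorem add_sub_one_mod_of_succ_mod {s t : ℕ} (ht : t < m) (hts : (t + 1) % m = s) :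
    (s + m - 1) % m = t := by
  subst hts
  rw [add_one_mod_eq_ite ht]
  split_ifs with h
  · rw [Nat.zero_add, Nat.mod_eq_of_lt (by omega)]
    omega
  · rw [show t + 1 + m - 1 = t + m by omega, Nat.add_mod_right, Nat.mod_eq_of_lt ht]

theorem sub_mod_eq_of_succ_mod {s t i : ℕ} (ht : t < m) (hts : (t + 1) % m = s)
    (hi : i < m - 1) : (t + m - 1 - i) % m = (s + m - 1 - (i + 1)) % m := by
  subst hts
  rw [add_one_mod_eq_ite ht]
  split_ifs
  · rw [mod_eq_ite_of_lt_two_mul (by omega), mod_eq_ite_of_lt_two_mul (by omega)]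
    split_ifs <;> omega
  · congr 1
    omega

end CycleArithmetic

section MinWeight

open Function

variable {m : ℕ}

noncomputable def minWeight (m : ℕ) (w : ℕ → ℕ) : ℕ := sInf (w '' Set.Iio m)

theorem minWeight_le (w : ℕ → ℕ) {i : ℕ} (hi : i < m) : minWeight m w ≤ w i :=
  Nat.sInf_le ⟨i, hi, rfl⟩

theorem exists_eq_minWeight (w : ℕ → ℕ) (hm : 0 < m) : ∃ j < m, w j = minWeight m w := by
  obtain ⟨j, hj, hwj⟩ := Nat.sInf_mem (s := w '' Set.Iio m) ⟨w 0, 0, hm, rfl⟩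
  exact ⟨j, hj, hwj⟩

theorem minWeight_update {w : ℕ → ℕ} {e k : ℕ} (he : e < m) (hk : k < w e) :
    minWeight m (update w e k) = min k (minWeight m w) := by
  have hk' : minWeight m (update w e k) ≤ k := by
    simpa using minWeight_le (update w e k) he
  refine le_antisymm (le_min hk' ?_) ?_
  · obtain ⟨j, hj, hwj⟩ := exists_eq_minWeight w he.pos
    rcases eq_or_ne j e with rfl | hje
    · omega
    · simpa [hje, hwj] using minWeight_le (update w e k) hj
  · obtain ⟨j, hj, hwj⟩ := exists_eq_minWeight (update w e k) he.pos
    rcases eq_or_ne j e with rfl | hje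
    · rw [← hwj, update_self]
      exact min_le_left _ _
    · rw [← hwj, update_of_ne hje]
      exact min_le_of_right_le (minWeight_le w hj)

theorem minWeight_eq_inf' (w : ℕ → ℕ) (h : (Finset.range m).Nonempty) :
    minWeight m w = (Finset.range m).inf' h w := by
  obtain ⟨j, hj, hwj⟩ := Finset.exists_mem_eq_inf' h w
  obtain ⟨j', hj', hwj'⟩ := exists_eq_minWeight w (Finset.nonempty_range_iff.mp h).bot_lt
  refine le_antisymm ?_ ?_
  · exact hwj ▸ minWeight_le w (Finset.mem_range.mp hj)
  · exact hwj' ▸ Finset.inf'_le w (Finset.mem_range.mpr hj')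

theorem exists_add_mod_eq_minWeight (w : ℕ → ℕ) {s : ℕ} (hs : s < m) :
    ∃ i < m, w ((s + i) % m) = minWeight m w := by
  obtain ⟨j, hj, hwj⟩ := exists_eq_minWeight w (Nat.zero_lt_of_lt hs)
  rcases le_or_gt s j with hsj | hjs
  · exact ⟨j - s, by omega, by rw [Nat.add_sub_cancel' hsj, Nat.mod_eq_of_lt hj, hwj]⟩
  · refine ⟨j + m - s, by omega, ?_⟩
    rw [show s + (j + m - s) = j + m by omega, Nat.add_mod_right, Nat.mod_eq_of_lt hj, hwj]

theorem exists_sub_mod_eq_minWeight (w : ℕ → ℕ) {s : ℕ} (hs : s < m) :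
    ∃ i < m, w ((s + m - 1 - i) % m) = minWeight m w := by
  obtain ⟨j, hj, hwj⟩ := exists_eq_minWeight w (Nat.zero_lt_of_lt hs)
  rcases lt_or_ge j s with hjs | hsj
  · refine ⟨s - 1 - j, by omega, ?_⟩
    rw [show s + m - 1 - (s - 1 - j) = j + m by omega, Nat.add_mod_right, Nat.mod_eq_of_lt hj, hwj]
  · refine ⟨s + m - 1 - j, by omega, ?_⟩
    rw [show s + m - 1 - (s + m - 1 - j) = j by omega, Nat.mod_eq_of_lt hj, hwj]

end MinWeight

section CycleMoves

open Function

variable {m : ℕ}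

def IsCycleEdge (m e : ℕ) (u v : Fin m) : Prop :=
  (u.val = e ∧ v.val = (e + 1) % m) ∨ (u.val = (e + 1) % m ∧ v.val = e)

theorem cycW_update_of_isCycleEdge (hm : 3 ≤ m) (w : ℕ → ℕ) {e : ℕ} (he : e < m) (k : ℕ)
    {u v : Fin m} (huv : IsCycleEdge m e u v) : cycW m (update w e k) u v = k := by
  unfold cycW
  unfold IsCycleEdge at huv
  rw [add_one_mod_eq_ite he] at huv
  rw [add_one_mod_eq_ite u.isLt, add_one_mod_eq_ite v.isLt]
  simp only [update_apply]
  split_ifs at huv ⊢ <;> omega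

theorem cycW_update_of_not_isCycleEdge (w : ℕ → ℕ) {e : ℕ} (he : e < m) (k : ℕ)
    {u v : Fin m} (huv : ¬ IsCycleEdge m e u v) : cycW m (update w e k) u v = cycW m w u v := by
  unfold cycW
  unfold IsCycleEdge at huv
  rw [add_one_mod_eq_ite he] at huv
  rw [add_one_mod_eq_ite u.isLt, add_one_mod_eq_ite v.isLt]
  simp only [update_apply]
  split_ifs at huv ⊢ <;> omega

theorem cycW_of_isCycleEdge (hm : 3 ≤ m) (w : ℕ → ℕ) {e : ℕ} (he : e < m) {u v : Fin m}
    (huv : IsCycleEdge m e u v) : cycW m w u v = w e := by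
  simpa using cycW_update_of_isCycleEdge hm w he (w e) huv

theorem IsCycleEdge.iff {e : ℕ} {s t u v : Fin m} (hst : IsCycleEdge m e s t) :
    IsCycleEdge m e u v ↔ (u = s ∧ v = t) ∨ (u = t ∧ v = s) := by
  simp only [IsCycleEdge, Fin.ext_iff] at hst ⊢
  omega

def cyclePos (m : ℕ) (w : ℕ → ℕ) (s : Fin m) : NimPos (Fin m) :=
  ⟨cycW m w, cycW_symm m w, s⟩

theorem nimMove_cyclePos (hm : 3 ≤ m) {w : ℕ → ℕ} {e k : ℕ} (he : e < m) (hk : k < w e)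
    {s t : Fin m} (hst : IsCycleEdge m e s t) :
    NimMove (cyclePos m w s) (cyclePos m (update w e k) t) := by
  refine ⟨?_, ?_, fun u v huv =>
    cycW_update_of_not_isCycleEdge w he k fun hedge => huv (hst.iff.mp hedge)⟩
  · change s ≠ t
    rintro rfl
    unfold IsCycleEdge at hst
    rw [add_one_mod_eq_ite he] at hst
    split_ifs at hst <;> omega
  · change cycW m (update w e k) s t < cycW m w s t
    rwa [cycW_update_of_isCycleEdge hm w he k hst, cycW_of_isCycleEdge hm w he hst]

theorem exists_eq_cyclePos_of_nimMove (hm : 3 ≤ m) {w : ℕ → ℕ} {s : Fin m}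
    {q : NimPos (Fin m)} (h : NimMove (cyclePos m w s) q) :
    ∃ e k, e < m ∧ k < w e ∧ IsCycleEdge m e s q.pos ∧
      q = cyclePos m (update w e k) q.pos := by
  have hadj : IsCycleEdge m s s q.pos ∨ IsCycleEdge m q.pos s q.pos := by
    have hpos : 0 < cycW m w s q.pos := (Nat.zero_le _).trans_lt h.2.1
    unfold cycW at hpos
    unfold IsCycleEdge
    split_ifs at hpos with h1 h2 <;> simp_all
  obtain ⟨e, he, hedge⟩ : ∃ e < m, IsCycleEdge m e s q.pos :=
    hadj.elim (fun h => ⟨s, s.isLt, h⟩) fun h => ⟨q.pos, q.pos.isLt, h⟩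
  refine ⟨e, q.w s q.pos, he, ?_, hedge, ?_⟩
  · simpa [cyclePos, cycW_of_isCycleEdge hm w he hedge] using h.2.1
  · have hw : q.w = cycW m (update w e (q.w s q.pos)) := by
      funext u v
      rw [h.w_eq]
      split_ifs with huv
      · exact (cycW_update_of_isCycleEdge hm w he _ (hedge.iff.mpr huv)).symm
      · exact (cycW_update_of_not_isCycleEdge w he _ (mt hedge.iff.mp huv)).symm
    generalize q.w s q.pos = k at hw ⊢
    obtain ⟨qw, qsymm, qpos⟩ := q
    subst hw
    rfl

end CycleMoves

section ReducedRun

open Function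

variable {m : ℕ}

theorem fwdLen_eq_posRun (w : ℕ → ℕ) (s : ℕ) :
    fwdLen m w s = posRun m fun i => w ((s + i) % m) := rfl

theorem bwdLen_eq_posRun (w : ℕ → ℕ) (s : ℕ) :
    bwdLen m w s = posRun m fun i => w ((s + m - 1 - i) % m) := rfl

/-- The paper's criterion: in the graph reduced by the minimum weight, one of the two maximal
paths leaving `s` has odd length. -/
def OddReducedRun (m : ℕ) (w : ℕ → ℕ) (s : ℕ) : Prop :=
  Odd (fwdLen m (fun i => w i - minWeight m w) s) ∨
    Odd (bwdLen m (fun i => w i - minWeight m w) s)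

theorem oddReducedRun_of_even_fwdLen (hm : Even m) {w : ℕ → ℕ} {s k : ℕ} (hs : s < m)
    (heven : Even (fwdLen m (fun i => w i - minWeight m w) s)) (hk : k < w s) :
    OddReducedRun m (update w s k) ((s + 1) % m) := by
  left
  rw [minWeight_update hs hk]
  refine odd_posRun_of_even (A := fun i => w ((s + i) % m)) hm
    (fun i _ => minWeight_le w (Nat.mod_lt _ (Nat.zero_lt_of_lt hs)))
    (exists_add_mod_eq_minWeight w hs) heven (by rwa [Nat.add_zero, Nat.mod_eq_of_lt hs])
    (fun i hi => ?_) (by rw [succ_mod_add_pred hs, update_self])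
  rw [succ_mod_add_mod, update_of_ne (add_mod_ne_self hs (by omega) (by omega))]

theorem oddReducedRun_of_even_bwdLen (hm : Even m) {w : ℕ → ℕ} {s t k : ℕ} (ht : t < m)
    (hts : (t + 1) % m = s) (heven : Even (bwdLen m (fun i => w i - minWeight m w) s))
    (hk : k < w t) :
    OddReducedRun m (update w t k) t := by
  right
  rw [minWeight_update ht hk]
  have hs : s < m := hts ▸ Nat.mod_lt _ (Nat.zero_lt_of_lt ht)
  refine odd_posRun_of_even (A := fun i => w ((s + m - 1 - i) % m)) hm
    (fun i _ => minWeight_le w (Nat.mod_lt _ (Nat.zero_lt_of_lt hs)))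
    (exists_sub_mod_eq_minWeight w hs) heven
    (by rwa [Nat.sub_zero, add_sub_one_mod_of_succ_mod ht hts]) (fun i hi => ?_) ?_
  · rw [← sub_mod_eq_of_succ_mod ht hts hi, update_of_ne]
    rw [show t + m - 1 - i = t + (m - 1 - i) by omega]
    exact add_mod_ne_self ht (by omega) (by omega)
  · rw [show t + m - 1 - (m - 1) = t by omega, Nat.mod_eq_of_lt ht, update_self]

theorem not_oddReducedRun_of_odd_fwdLen {w : ℕ → ℕ} {s : ℕ} (hs : s < m)
    (hodd : Odd (fwdLen m (fun i => w i - minWeight m w) s)) :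
    minWeight m w < w s ∧ ¬ OddReducedRun m (update w s (minWeight m w)) ((s + 1) % m) := by
  have hlt : minWeight m w < w s := by
    have := pos_of_lt_posRun (f := fun i => w ((s + i) % m) - minWeight m w) hodd.pos
    rw [Nat.add_zero, Nat.mod_eq_of_lt hs] at this
    omega
  refine ⟨hlt, ?_⟩
  rw [OddReducedRun, minWeight_update hs hlt, min_self, not_or, Nat.not_odd_iff_even,
    Nat.not_odd_iff_even]
  constructor
  · refine even_posRun_of_odd (A := fun i => w ((s + i) % m)) (exists_add_mod_eq_minWeight w hs)
      hodd fun i hi => ?_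
    rw [succ_mod_add_mod, update_of_ne (add_mod_ne_self hs (by omega) (by omega))]
  · rw [bwdLen_eq_posRun, posRun_eq_zero]
    · exact Even.zero
    · rw [Nat.sub_zero, Nat.add_sub_assoc (Nat.one_le_of_lt hs), succ_mod_add_pred hs, update_self,
        Nat.sub_self]

theorem not_oddReducedRun_of_odd_bwdLen {w : ℕ → ℕ} {s t : ℕ} (ht : t < m)
    (hts : (t + 1) % m = s) (hodd : Odd (bwdLen m (fun i => w i - minWeight m w) s)) :
    minWeight m w < w t ∧ ¬ OddReducedRun m (update w t (minWeight m w)) t := by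
  have hs : s < m := hts ▸ Nat.mod_lt _ (Nat.zero_lt_of_lt ht)
  have hlt : minWeight m w < w t := by
    have := pos_of_lt_posRun (f := fun i => w ((s + m - 1 - i) % m) - minWeight m w) hodd.pos
    rw [Nat.sub_zero, add_sub_one_mod_of_succ_mod ht hts] at this
    omega
  refine ⟨hlt, ?_⟩
  rw [OddReducedRun, minWeight_update ht hlt, min_self, not_or, Nat.not_odd_iff_even,
    Nat.not_odd_iff_even]
  constructor
  · rw [fwdLen_eq_posRun, posRun_eq_zero]
    · exact Even.zero
    · rw [Nat.add_zero, Nat.mod_eq_of_lt ht, update_self, Nat.sub_self]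
  · refine even_posRun_of_odd (A := fun i => w ((s + m - 1 - i) % m))
      (exists_sub_mod_eq_minWeight w hs) hodd fun i hi => ?_
    rw [← sub_mod_eq_of_succ_mod ht hts hi, update_of_ne]
    rw [show t + m - 1 - i = t + (m - 1 - i) by omega]
    exact add_mod_ne_self ht (by omega) (by omega)

theorem moverWins_cyclePos_iff (hm3 : 3 ≤ m) (hm : Even m) (w : ℕ → ℕ) (s : Fin m) :
    MoverWins (cyclePos m w s) ↔ OddReducedRun m w s := by
  refine moverWins_iff_of_kernel (fun p : (ℕ → ℕ) × Fin m => cyclePos m p.1 p.2)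
    (fun p => OddReducedRun m p.1 p.2) ?_ ?_ (w, s)
  · rintro ⟨w, s⟩ (hodd | hodd)
    · obtain ⟨hlt, hnot⟩ := not_oddReducedRun_of_odd_fwdLen s.isLt hodd
      exact ⟨(_, ⟨(s + 1) % m, Nat.mod_lt _ s.pos⟩),
        nimMove_cyclePos hm3 s.isLt hlt (Or.inl ⟨rfl, rfl⟩), hnot⟩
    · have ht : (s + m - 1) % m < m := Nat.mod_lt _ s.pos
      have hts : ((s + m - 1) % m + 1) % m = s := by
        rw [Nat.mod_add_mod, Nat.sub_add_cancel (by omega), Nat.add_mod_right,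
          Nat.mod_eq_of_lt s.isLt]
      obtain ⟨hlt, hnot⟩ := not_oddReducedRun_of_odd_bwdLen ht hts hodd
      exact ⟨(_, ⟨_, ht⟩), nimMove_cyclePos hm3 ht hlt (Or.inr ⟨hts.symm, rfl⟩), hnot⟩
  · rintro ⟨w, s⟩ q hW hq
    simp only [OddReducedRun, not_or, Nat.not_odd_iff_even] at hW
    obtain ⟨e, k, he, hk, hedge, hq⟩ := exists_eq_cyclePos_of_nimMove hm3 hq
    refine ⟨(update w e k, q.pos), hq, ?_⟩
    rcases hedge with ⟨hse, hqe⟩ | ⟨hse, hqe⟩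
    · subst hse
      simpa only [hqe] using oddReducedRun_of_even_fwdLen hm s.isLt hW.1 hk
    · subst hqe
      exact oddReducedRun_of_even_bwdLen hm q.pos.isLt hse.symm hW.2 hk

end ReducedRun

/-- for the even cycle `C_{2n}` with weights `ω`, minimum weight
`m`, and reduced graph `G'` with weights `ω - m`, a position is a p-position in
`G` iff it is one in `G'`; equivalently the first player wins `G` iff from the
starting vertex there is an odd-length path to a leaf in `G'` (i.e. one of the
two maximal runs of positive edges away from the start has odd length). -/
theorem stmt6 (n : ℕ) (hn : 2 ≤ n) (ω : ℕ → ℕ)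
    (m : ℕ)
    (hm : m = (Finset.range (2*n)).inf'
        (Finset.nonempty_range_iff.mpr (by omega)) ω)
    (s : Fin (2*n)) :
    (MoverWins ⟨cycW (2*n) ω, cycW_symm (2*n) ω, s⟩ ↔
      MoverWins ⟨cycW (2*n) (fun i => ω i - m),
        cycW_symm (2*n) (fun i => ω i - m), s⟩) ∧
    (MoverWins ⟨cycW (2*n) ω, cycW_symm (2*n) ω, s⟩ ↔
      (Odd (fwdLen (2*n) (fun i => ω i - m) s.val) ∨
       Odd (bwdLen (2*n) (fun i => ω i - m) s.val))) := by
  have hwins (w : ℕ → ℕ) := moverWins_cyclePos_iff (by omega) (even_two_mul n) w s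
  have hmin : minWeight (2*n) ω = m := hm ▸ minWeight_eq_inf' ω _
  have hmin' : minWeight (2*n) (fun i => ω i - m) = 0 := by
    obtain ⟨j, hj, hwj⟩ := exists_eq_minWeight (m := 2*n) ω (by omega)
    simpa [hwj, hmin] using minWeight_le (fun i => ω i - m) hj
  dsimp only [cyclePos] at hwins
  simp only [hwins, OddReducedRun, hmin, hmin', Nat.sub_zero, and_self]
end

section
/- In Nim on graphs played on the complete bipartite graph K_{2,j} (j ≥ 1) with every edge of weight 1 and the indicator piece starting at a vertex of the partite set of size 2, the second player has a winning strategy. -/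
/-! The piece starts at the hub `a` of `K_{2,S}`. Whatever leaf `s` the first player moves to,
the second player moves on to the other hub `b`. Both edges at `s` are then deleted, so the
position is again `K_{2,S'}` with the piece on a hub, and `S' = S \ {s}` is smaller. When `S`
is empty the player to move is stuck and loses. -/

def eraseEdge {V : Type} [DecidableEq V] (w : V → V → ℕ) (x y : V) (u v : V) : ℕ :=
  if s(u, v) = s(x, y) then 0 else w u v

section Move

variable {V : Type} [DecidableEq V] {p q : NimPos V}

theorem NimMove.w_eq_eraseEdge (h : NimMove p q) (h1 : p.w p.pos q.pos ≤ 1) :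
    q.w = eraseEdge p.w p.pos q.pos := by
  obtain ⟨-, hlt, hrest⟩ := h
  funext u v
  by_cases huv : s(u, v) = s(p.pos, q.pos)
  · rw [eraseEdge, if_pos huv]
    rcases Sym2.eq_iff.1 huv with ⟨rfl, rfl⟩ | ⟨rfl, rfl⟩
    · omega
    · rw [q.symm]; omega
  · rw [eraseEdge, if_neg huv]
    exact hrest u v (by rwa [Sym2.eq_iff] at huv)

theorem nimMove_of_eq_eraseEdge (hne : p.pos ≠ q.pos) (hpos : 0 < p.w p.pos q.pos)
    (hq : q.w = eraseEdge p.w p.pos q.pos) : NimMove p q := by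
  refine ⟨hne, by simp [hq, eraseEdge, hpos], fun u v huv => ?_⟩
  rw [hq, eraseEdge, if_neg (by rwa [Sym2.eq_iff])]

end Move

def k2FinsetW {V : Type} [DecidableEq V] (a b : V) (S : Finset V) (u v : V) : ℕ :=
  if (u = a ∨ u = b) ∧ v ∈ S ∨ (v = a ∨ v = b) ∧ u ∈ S then 1 else 0

section K2

variable {V : Type} [DecidableEq V] {a b : V} {S : Finset V}

theorem k2FinsetW_symm (a b : V) (S : Finset V) :
    ∀ u v, k2FinsetW a b S u v = k2FinsetW a b S v u := by
  intro u v
  simp only [k2FinsetW, or_comm]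

theorem k2FinsetW_le_one (u v : V) : k2FinsetW a b S u v ≤ 1 := by
  unfold k2FinsetW; split_ifs <;> omega

theorem NimMove.pos_mem_of_k2FinsetW (ha : a ∉ S) {q : NimPos V}
    (h : NimMove ⟨k2FinsetW a b S, k2FinsetW_symm a b S, a⟩ q) : q.pos ∈ S := by
  have hpos : 0 < k2FinsetW a b S a q.pos := Nat.zero_lt_of_lt h.2.1
  unfold k2FinsetW at hpos
  split_ifs at hpos with hadj
  · tauto
  · omega

theorem eraseEdge_eraseEdge_k2FinsetW (hab : a ≠ b) (ha : a ∉ S) (hb : b ∉ S) {s : V}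
    (hs : s ∈ S) :
    eraseEdge (eraseEdge (k2FinsetW a b S) a s) s b = k2FinsetW b a (S.erase s) := by
  have has : a ≠ s := by rintro rfl; exact ha hs
  have hbs : b ≠ s := by rintro rfl; exact hb hs
  funext u v
  simp only [eraseEdge, k2FinsetW, Sym2.eq_iff, Finset.mem_erase]
  grind

theorem moverLoses_k2FinsetW (S : Finset V) :
    ∀ a b, a ≠ b → a ∉ S → b ∉ S → MoverLoses ⟨k2FinsetW a b S, k2FinsetW_symm a b S, a⟩ := by
  induction S using Finset.strongInduction with
  | H S ih =>
    intro a b hab ha hb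
    refine MoverLoses.intro _
      (fun q _ => ⟨k2FinsetW b a (S.erase q.pos), k2FinsetW_symm _ _ _, b⟩) ?_ ?_
    · intro q hmove
      have hs := hmove.pos_mem_of_k2FinsetW ha
      have hq := hmove.w_eq_eraseEdge (k2FinsetW_le_one _ _)
      refine nimMove_of_eq_eraseEdge (fun h : q.pos = b => hb (h ▸ hs)) ?_ ?_
      · simp only [hq, eraseEdge, k2FinsetW, Sym2.eq_iff]
        grind
      · simp only [hq]
        exact (eraseEdge_eraseEdge_k2FinsetW hab ha hb hs).symm
    · intro q hmove
      exact ih _ (Finset.erase_ssubset (hmove.pos_mem_of_k2FinsetW ha)) b a hab.symm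
        (fun h => hb (Finset.mem_of_mem_erase h)) (fun h => ha (Finset.mem_of_mem_erase h))

end K2

theorem k2W_eq_k2FinsetW (j : ℕ) :
    k2W j = k2FinsetW 0 1 (Finset.univ.filter fun v : Fin (j + 2) => 2 ≤ v.val) := by
  funext u v
  simp only [k2W, k2FinsetW, Finset.mem_filter, Finset.mem_univ, true_and, Fin.ext_iff,
    Fin.val_zero, Fin.val_one]
  grind

theorem stmt7_general (j : ℕ) :
    MoverLoses ⟨k2W j, k2W_symm j, (0 : Fin (j+2))⟩ := by
  have h := moverLoses_k2FinsetW (Finset.univ.filter fun v : Fin (j + 2) => 2 ≤ v.val) 0 1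
    (by simp) (by simp) (by simp)
  simp_rw [← k2W_eq_k2FinsetW] at h
  exact h

/-- Nim on `K_{2,j}` (`j ≥ 1`) with all weights 1, piece starting
at a vertex of the size-2 part: the second player wins. -/
theorem stmt7 (j : ℕ) (hj : 1 ≤ j) :
    MoverLoses ⟨k2W j, k2W_symm j, (0 : Fin (j+2))⟩ :=
  stmt7_general j
end
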